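/- arXiv:1604.08435 — 2 statements merged into one kernel-verified Lean document; each statement's English description precedes it below -/
import Mathlib

section
/- Let k be a field and R = k[X,Y,Z]/(X^{n+1} - YZ). For every m ∈ ℕ, writing m = l(n+1) + r with 0 ≤ r ≤ n, the k-vector space dimension of R/(X^m, Y^m, Z^m) equals (2 - 1/(n+1))·m² + r²/(n+1) - r. -/
open MvPolynomial

noncomputable section

/-- The defining ideal of the `A_n` surface ring `k[X,Y,Z]/(X^{n+1} - YZ)`. -/
def anRel (k : Type*) [Field k] (n : ℕ) : Ideal (MvPolynomial (Fin 3) k) :=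
  Ideal.span {X 0 ^ (n + 1) - X 1 * X 2}

/-!
Send `X ↦ st`, `Y ↦ s^{n+1}`, `Z ↦ t^{n+1}`, so that `X^a Y^b Z^c` goes to `s^u t^v` with weight
`(u, v) = (a + b(n+1), a + c(n+1))`; the weights are exactly the pairs with `u ≡ v mod n+1`.
Modulo `YZ = X^{n+1}` a monomial only depends on its weight, and it lies in `(X^m, Y^m, Z^m)`
as soon as its weight dominates `(m, m)`, `(m(n+1), 0)` or `(0, m(n+1))`, the weights of the
generators. Conversely, reading off the coefficients of `s^u t^v` at the remaining weights kills
the ideal, so the congruent pairs with `u, v < m(n+1)` and `min(u, v) < m` index a basis of the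
quotient. Those with `u < m` and those with `v < m` each number `m²`, and both conditions hold for
the `(n+1)l² + 2lr + r` congruent pairs in `[0, m)²`.
-/

open Finset

theorem Nat.exists_eq_add_mul_of_add_mul_eq {d a b c a' b' c' : ℕ} (hd : 0 < d) (ha : a ≤ a')
    (hb : a + b * d = a' + b' * d) (hc : a + c * d = a' + c' * d) :
    ∃ j, a' = a + j * d ∧ b = b' + j ∧ c = c' + j := by
  have hb' : b' ≤ b := le_of_mul_le_mul_right (by omega) hd
  have hc' : c' ≤ c := le_of_mul_le_mul_right (by omega) hd
  obtain ⟨j, rfl⟩ := Nat.exists_eq_add_of_le hb'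
  obtain ⟨i, rfl⟩ := Nat.exists_eq_add_of_le hc'
  rw [add_mul] at hb hc
  obtain rfl : i = j := Nat.eq_of_mul_eq_mul_right hd (by omega)
  exact ⟨i, by omega, rfl, rfl⟩

theorem Nat.ModEq.min_add_tsub_div_mul {d u v : ℕ} (h : u ≡ v [MOD d]) :
    min u v + (u - v) / d * d = u := by
  rw [Nat.div_mul_cancel (Nat.dvd_of_mod_eq_zero (Nat.sub_mod_eq_zero_of_mod_eq h))]
  omega

theorem pow_mul_pow_add_mul_pow_add {M : Type*} [CommMonoid M] {x y z : M} {d : ℕ}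
    (h : y * z = x ^ d) (a b c j : ℕ) :
    x ^ a * y ^ (b + j) * z ^ (c + j) = x ^ (a + j * d) * y ^ b * z ^ c := by
  rw [pow_add, pow_add, pow_add, pow_mul', ← h, mul_pow]
  ac_rfl

section Counting

open Nat

theorem card_filter_modEq_range_product (a b d : ℕ) :
    #{w ∈ range a ×ˢ range b | w.1 ≡ w.2 [MOD d]} = ∑ u ∈ range a, count (· ≡ u [MOD d]) b := by
  rw [card_filter, sum_product]
  refine sum_congr rfl fun u _ => ?_
  rw [count_eq_card_filter_range, card_filter]
  simp only [Nat.ModEq.comm]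

variable {d : ℕ}

theorem count_modEq_mul (hd : 0 < d) (u m : ℕ) : count (· ≡ u [MOD d]) (m * d) = m := by
  simp [count_modEq_card _ hd, Nat.mul_div_cancel _ hd]

theorem count_modEq_mul_add {r : ℕ} (hr : r < d) (u l : ℕ) :
    count (· ≡ u [MOD d]) (l * d + r) = l + if u % d < r then 1 else 0 := by
  rw [count_modEq_card _ (by omega), mul_comm, Nat.mul_add_div (by omega), Nat.mul_add_mod,
    Nat.div_eq_of_lt hr, Nat.mod_eq_of_lt hr, add_zero]

theorem card_filter_mod_lt {r : ℕ} (hr : r < d) (l : ℕ) :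
    #{u ∈ range (l * d + r) | u % d < r} = r * (l + 1) := by
  rw [card_eq_sum_card_fiberwise (f := (· % d)) (t := range r) fun u hu => by
    simpa using (mem_filter.mp hu).2]
  have hfiber (ρ : ℕ) (hρ : ρ < r) :
      #{u ∈ {u ∈ range (l * d + r) | u % d < r} | u % d = ρ} = l + 1 := by
    have hcount := count_modEq_mul_add hr ρ l
    rw [Nat.mod_eq_of_lt (hρ.trans hr), if_pos hρ, count_eq_card_filter_range] at hcount
    rw [filter_filter, ← hcount]
    refine congrArg card (filter_congr fun u _ => ?_)
    rw [Nat.ModEq, Nat.mod_eq_of_lt (hρ.trans hr)]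
    exact ⟨fun h => h.2, fun h => ⟨h ▸ hρ, h⟩⟩
  rw [sum_congr rfl fun ρ hρ => hfiber ρ (mem_range.mp hρ), sum_const, card_range, smul_eq_mul]

theorem card_filter_modEq_range_product_self {r : ℕ} (hr : r < d) (l : ℕ) :
    #{w ∈ range (l * d + r) ×ˢ range (l * d + r) | w.1 ≡ w.2 [MOD d]}
      = d * l ^ 2 + 2 * l * r + r := by
  rw [card_filter_modEq_range_product]
  simp only [count_modEq_mul_add hr, sum_add_distrib, sum_const, card_range, smul_eq_mul,
    sum_boole, Nat.cast_id, card_filter_mod_lt hr]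
  ring

end Counting

namespace AnSurface

/-- The weights `(u, v)` of the monomials `s^u t^v` that form a basis of `R/(X^m, Y^m, Z^m)`,
for `d = n + 1`. -/
def basisWeights (d m : ℕ) : Finset (ℕ × ℕ) :=
  {w ∈ range (m * d) ×ˢ range (m * d) | w.1 ≡ w.2 [MOD d] ∧ (w.1 < m ∨ w.2 < m)}

theorem mem_basisWeights {d m : ℕ} {w : ℕ × ℕ} : w ∈ basisWeights d m ↔
    w.1 < m * d ∧ w.2 < m * d ∧ w.1 ≡ w.2 [MOD d] ∧ (w.1 < m ∨ w.2 < m) := by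
  simp [basisWeights, and_assoc]

theorem card_basisWeights_add {d r : ℕ} (hr : r < d) (l : ℕ) :
    #(basisWeights d (l * d + r)) + (d * l ^ 2 + 2 * l * r + r) = 2 * (l * d + r) ^ 2 := by
  set m := l * d + r
  have hm : m ≤ m * d := Nat.le_mul_of_pos_right m (by omega)
  let P : Finset (ℕ × ℕ) := {w ∈ range m ×ˢ range (m * d) | w.1 ≡ w.2 [MOD d]}
  let Q : Finset (ℕ × ℕ) := {w ∈ range (m * d) ×ˢ range m | w.1 ≡ w.2 [MOD d]}
  have hunion : basisWeights d m = P ∪ Q := by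
    ext w
    simp only [P, Q, mem_basisWeights, mem_union, mem_filter, mem_product, mem_range]
    constructor
    · rintro ⟨h1, h2, hw, h | h⟩
      exacts [Or.inl ⟨⟨h, h2⟩, hw⟩, Or.inr ⟨⟨h1, h⟩, hw⟩]
    · rintro (⟨⟨h1, h2⟩, hw⟩ | ⟨⟨h1, h2⟩, hw⟩)
      exacts [⟨by omega, h2, hw, Or.inl h1⟩, ⟨h1, by omega, hw, Or.inr h2⟩]
  have hinter : P ∩ Q = {w ∈ range m ×ˢ range m | w.1 ≡ w.2 [MOD d]} := by
    ext w
    simp only [P, Q, mem_inter, mem_filter, mem_product, mem_range]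
    constructor
    · rintro ⟨⟨⟨h1, -⟩, hw⟩, ⟨-, h2⟩, -⟩; exact ⟨⟨h1, h2⟩, hw⟩
    · rintro ⟨⟨h1, h2⟩, hw⟩; exact ⟨⟨⟨h1, by omega⟩, hw⟩, ⟨by omega, h2⟩, hw⟩
  have hP : #P = m * m := by
    simp only [P, card_filter_modEq_range_product, count_modEq_mul (by omega : 0 < d),
      sum_const, card_range, smul_eq_mul]
  have hQ : #Q = #P := by
    refine card_nbij' Prod.swap Prod.swap ?_ ?_ (fun _ _ => rfl) (fun _ _ => rfl) <;>
      · intro w hw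
        simp only [P, Q, coe_filter, Set.mem_ofPred_eq, mem_product, mem_range] at hw ⊢
        exact ⟨hw.1.symm, hw.2.symm⟩
  rw [hunion, ← card_filter_modEq_range_product_self hr, ← hinter, card_union_add_card_inter, hQ,
    hP]
  ring

section Param

variable (k : Type*) [CommRing k] (n : ℕ)

/-- `k[s, t]` is realised as `AddMonoidAlgebra k (ℕ × ℕ)`, with `s^u t^v = single (u, v) 1`. -/
def param : MvPolynomial (Fin 3) k →ₐ[k] AddMonoidAlgebra k (ℕ × ℕ) :=
  aeval ![.single (1, 1) 1, .single (n + 1, 0) 1, .single (0, n + 1) 1]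

def stdMonomial (d : ℕ) (w : ℕ × ℕ) : MvPolynomial (Fin 3) k :=
  X 0 ^ min w.1 w.2 * X 1 ^ ((w.1 - w.2) / d) * X 2 ^ ((w.2 - w.1) / d)

variable {k n}

theorem param_monomial (a b c : ℕ) :
    param k n (X 0 ^ a * X 1 ^ b * X 2 ^ c) = .single (a + b * (n + 1), a + c * (n + 1)) 1 := by
  simp [param, AddMonoidAlgebra.single_mul_single]

theorem param_X_pow_sub_X_mul_X : param k n (X 0 ^ (n + 1) - X 1 * X 2) = 0 := by
  simpa using congrArg₂ (· - ·) (param_monomial (k := k) (n := n) (n + 1) 0 0)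
    (param_monomial (k := k) (n := n) 0 1 1)

theorem param_stdMonomial {w : ℕ × ℕ} (hw : w.1 ≡ w.2 [MOD n + 1]) :
    param k n (stdMonomial k (n + 1) w) = .single w 1 := by
  rw [stdMonomial, param_monomial, hw.min_add_tsub_div_mul, min_comm,
    hw.symm.min_add_tsub_div_mul]

theorem coeff_param_mul_monomial_of_not_le (q : MvPolynomial (Fin 3) k) {a b c : ℕ}
    {w : ℕ × ℕ} (hw : ¬(a + b * (n + 1), a + c * (n + 1)) ≤ w) :
    (param k n (q * (X 0 ^ a * X 1 ^ b * X 2 ^ c))).coeff w = 0 := by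
  rw [map_mul, param_monomial]
  refine AddMonoidAlgebra.coeff_mul_single_of_forall_add_ne _ _ fun e he => hw ?_
  rw [← he]
  exact le_add_self

end Param

section Quotient

variable {k : Type*} [Field k] {n : ℕ}

theorem mk_X_mul_X :
    Ideal.Quotient.mk (anRel k n) (X 1) * Ideal.Quotient.mk (anRel k n) (X 2) =
      Ideal.Quotient.mk (anRel k n) (X 0) ^ (n + 1) := by
  rw [← map_mul, ← map_pow, Ideal.Quotient.mk_eq_mk_iff_sub_mem, ← neg_sub, neg_mem_iff]
  exact Ideal.subset_span rfl

theorem mk_monomial_eq_of_weight_eq {a b c a' b' c' : ℕ} (hb : a + b * (n + 1) = a' + b' * (n + 1))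
    (hc : a + c * (n + 1) = a' + c' * (n + 1)) :
    Ideal.Quotient.mk (anRel k n) (X 0 ^ a * X 1 ^ b * X 2 ^ c) =
      Ideal.Quotient.mk (anRel k n) (X 0 ^ a' * X 1 ^ b' * X 2 ^ c') := by
  wlog ha : a ≤ a' generalizing a b c a' b' c'
  · exact (this hb.symm hc.symm (by omega)).symm
  obtain ⟨j, rfl, rfl, rfl⟩ := Nat.exists_eq_add_mul_of_add_mul_eq n.succ_pos ha hb hc
  simp only [map_mul, map_pow]
  exact pow_mul_pow_add_mul_pow_add mk_X_mul_X a b' c' j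

theorem monomial_mem_of_weight_le {I : Ideal (MvPolynomial (Fin 3) k)} (hI : anRel k n ≤ I)
    {a₀ b₀ c₀ a b c : ℕ} (h₀ : X 0 ^ a₀ * X 1 ^ b₀ * X 2 ^ c₀ ∈ I)
    (hb : a₀ + b₀ * (n + 1) ≤ a + b * (n + 1)) (hc : a₀ + c₀ * (n + 1) ≤ a + c * (n + 1)) :
    X 0 ^ a * X 1 ^ b * X 2 ^ c ∈ I := by
  obtain ⟨u, hu⟩ := Nat.exists_eq_add_of_le hb
  obtain ⟨v, hv⟩ := Nat.exists_eq_add_of_le hc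
  have huv : u ≡ v [MOD n + 1] := by
    rw [Nat.modEq_iff_dvd]
    zify at hu hv
    exact ⟨(c : ℤ) - c₀ - b + b₀, by push_cast; linear_combination hu - hv⟩
  have hshift : Ideal.Quotient.mk (anRel k n) (X 0 ^ a * X 1 ^ b * X 2 ^ c) =
      Ideal.Quotient.mk (anRel k n)
        (X 0 ^ a₀ * X 1 ^ b₀ * X 2 ^ c₀ * stdMonomial k (n + 1) (u, v)) := by
    have h₁ := huv.min_add_tsub_div_mul
    have h₂ := huv.symm.min_add_tsub_div_mul
    rw [min_comm] at h₂
    rw [show X 0 ^ a₀ * X 1 ^ b₀ * X 2 ^ c₀ * stdMonomial k (n + 1) (u, v) =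
      X 0 ^ (a₀ + min u v) * X 1 ^ (b₀ + (u - v) / (n + 1)) * X 2 ^ (c₀ + (v - u) / (n + 1)) by
        simp only [stdMonomial, pow_add]; ring]
    apply mk_monomial_eq_of_weight_eq <;> (simp only [add_mul]; omega)
  simpa using I.add_mem (hI (Ideal.Quotient.eq.mp hshift))
    (I.mul_mem_right (stdMonomial k (n + 1) (u, v)) h₀)

end Quotient

section Basis

variable (k : Type*) [Field k] (n m : ℕ)

def powIdeal : Ideal (MvPolynomial (Fin 3) k) :=
  anRel k n ⊔ Ideal.span {X 0 ^ m, X 1 ^ m, X 2 ^ m}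

def weightCoeffs : MvPolynomial (Fin 3) k →ₗ[k] (basisWeights (n + 1) m → k) :=
  LinearMap.pi fun w => Finsupp.lapply w.1 ∘ₗ (AddMonoidAlgebra.coeffLinearEquiv k).toLinearMap ∘ₗ
    (param k n).toLinearMap

def stdCombination : (basisWeights (n + 1) m → k) →ₗ[k] MvPolynomial (Fin 3) k :=
  Fintype.linearCombination k fun w => stdMonomial k (n + 1) w.1

variable {k n m}

theorem weightCoeffs_apply (p : MvPolynomial (Fin 3) k) (w : basisWeights (n + 1) m) :
    weightCoeffs k n m p w = (param k n p).coeff w := rfl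

theorem weightCoeffs_monomial (a b c : ℕ) (w : basisWeights (n + 1) m) :
    weightCoeffs k n m (X 0 ^ a * X 1 ^ b * X 2 ^ c) w =
      if (a + b * (n + 1), a + c * (n + 1)) = w.1 then 1 else 0 := by
  rw [weightCoeffs_apply, param_monomial, AddMonoidAlgebra.coeff_single, Finsupp.single_apply]

theorem weightCoeffs_stdMonomial (v w : basisWeights (n + 1) m) :
    weightCoeffs k n m (stdMonomial k (n + 1) v.1) w = if v = w then 1 else 0 := by
  rw [weightCoeffs_apply, param_stdMonomial (mem_basisWeights.mp v.2).2.2.1,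
    AddMonoidAlgebra.coeff_single, Finsupp.single_apply]
  exact if_congr Subtype.ext_iff.symm rfl rfl

theorem weightCoeffs_stdCombination (c : basisWeights (n + 1) m → k) :
    weightCoeffs k n m (stdCombination k n m c) = c := by
  funext w
  simp [stdCombination, Fintype.linearCombination_apply, weightCoeffs_stdMonomial]

theorem weightCoeffs_eq_zero_of_mem {p : MvPolynomial (Fin 3) k} (hp : p ∈ powIdeal k n m) :
    weightCoeffs k n m p = 0 := by
  suffices ∀ q, weightCoeffs k n m (q * p) = 0 by simpa using this 1
  rw [powIdeal, anRel, ← Ideal.span_union] at hp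
  induction hp using Submodule.span_induction with
  | mem g hg =>
    intro q
    funext w
    obtain ⟨h1, h2, -, h3⟩ := mem_basisWeights.mp w.2
    rw [weightCoeffs_apply, Pi.zero_apply]
    rcases hg with rfl | rfl | rfl | rfl
    · simp [param_X_pow_sub_X_mul_X]
    · simpa using coeff_param_mul_monomial_of_not_le q (a := m) (b := 0) (c := 0)
        (by rw [Prod.le_def]; omega)
    · simpa using coeff_param_mul_monomial_of_not_le q (a := 0) (b := m) (c := 0)
        (by rw [Prod.le_def]; omega)
    · simpa using coeff_param_mul_monomial_of_not_le q (a := 0) (b := 0) (c := m)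
        (by rw [Prod.le_def]; omega)
  | zero => simp
  | add x y _ _ hx hy => intro q; rw [mul_add, map_add, hx, hy, add_zero]
  | smul a x _ hx => intro q; rw [smul_eq_mul, ← mul_assoc, hx]

theorem monomial_mem_powIdeal {a b c : ℕ}
    (hw : (a + b * (n + 1), a + c * (n + 1)) ∉ basisWeights (n + 1) m) :
    X 0 ^ a * X 1 ^ b * X 2 ^ c ∈ powIdeal k n m := by
  have hI : anRel k n ≤ powIdeal k n m := le_sup_left
  have hX (i : Fin 3) : X i ^ m ∈ powIdeal k n m :=
    Ideal.mem_sup_right (Ideal.subset_span (by fin_cases i <;> simp))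
  have hmod : a + b * (n + 1) ≡ a + c * (n + 1) [MOD n + 1] := by
    simp [Nat.ModEq, Nat.add_mul_mod_self_right]
  simp only [mem_basisWeights, hmod, true_and, not_and, not_or, not_lt] at hw
  by_cases hY : m * (n + 1) ≤ a + b * (n + 1)
  · exact monomial_mem_of_weight_le hI (a₀ := 0) (b₀ := m) (c₀ := 0) (by simpa using hX 1)
      (by simpa using hY) (by simp)
  by_cases hZ : m * (n + 1) ≤ a + c * (n + 1)
  · exact monomial_mem_of_weight_le hI (a₀ := 0) (b₀ := 0) (c₀ := m) (by simpa using hX 2)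
      (by simp) (by simpa using hZ)
  obtain ⟨hb, hc⟩ := hw (by omega) (by omega)
  exact monomial_mem_of_weight_le hI (a₀ := m) (b₀ := 0) (c₀ := 0) (by simpa using hX 0)
    (by simpa using hb) (by simpa using hc)

theorem sub_stdCombination_weightCoeffs_mem (p : MvPolynomial (Fin 3) k) :
    p - stdCombination k n m (weightCoeffs k n m p) ∈ powIdeal k n m := by
  change (LinearMap.id - stdCombination k n m ∘ₗ weightCoeffs k n m :
    MvPolynomial (Fin 3) k →ₗ[k] MvPolynomial (Fin 3) k) p ∈ (powIdeal k n m).restrictScalars k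
  induction p using MvPolynomial.induction_on' with
  | monomial e a =>
    rw [monomial_eq, Finsupp.prod_fintype _ _ fun i => pow_zero _, Fin.prod_univ_three,
      ← smul_eq_C_mul, map_smul]
    refine Submodule.smul_mem _ a ?_
    set w : ℕ × ℕ := (e 0 + e 1 * (n + 1), e 0 + e 2 * (n + 1))
    simp only [LinearMap.sub_apply, LinearMap.id_apply, LinearMap.comp_apply, stdCombination,
      Fintype.linearCombination_apply, weightCoeffs_monomial, ite_smul, one_smul, zero_smul,
      Submodule.restrictScalars_mem]
    by_cases hw : w ∈ basisWeights (n + 1) m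
    · rw [Fintype.sum_eq_single ⟨w, hw⟩ fun v hv => if_neg fun h => hv (Subtype.ext h.symm),
        if_pos rfl]
      refine le_sup_left (a := anRel k n) (Ideal.Quotient.eq.mp ?_)
      have huv := (mem_basisWeights.mp hw).2.2.1
      have h₁ := huv.min_add_tsub_div_mul
      have h₂ := huv.symm.min_add_tsub_div_mul
      rw [min_comm] at h₂
      exact mk_monomial_eq_of_weight_eq h₁.symm h₂.symm
    · rw [Finset.sum_eq_zero fun v _ => if_neg fun (h : w = v.1) => hw (h ▸ v.2), sub_zero]
      exact monomial_mem_powIdeal hw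
  | add p q hp hq => rw [map_add]; exact add_mem hp hq

theorem ker_weightCoeffs :
    LinearMap.ker (weightCoeffs k n m) = (powIdeal k n m).restrictScalars k := by
  ext p
  refine ⟨fun hp => ?_, weightCoeffs_eq_zero_of_mem⟩
  simpa [LinearMap.mem_ker.mp hp] using sub_stdCombination_weightCoeffs_mem (n := n) (m := m) p

theorem finrank_quotient_powIdeal :
    Module.finrank k (MvPolynomial (Fin 3) k ⧸ powIdeal k n m) = #(basisWeights (n + 1) m) := by
  let e := (Submodule.Quotient.restrictScalarsEquiv k (powIdeal k n m)).symm ≪≫ₗ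
    Submodule.quotEquivOfEq _ _ ker_weightCoeffs.symm ≪≫ₗ
    (weightCoeffs k n m).quotKerEquivOfSurjective
      (Function.LeftInverse.surjective weightCoeffs_stdCombination)
  rw [e.finrank_eq, Module.finrank_fintype_fun_eq_card, Fintype.card_coe]

theorem finrank_quotient_span_mk_X_pow :
    Module.finrank k ((MvPolynomial (Fin 3) k ⧸ anRel k n) ⧸
        Ideal.span {Ideal.Quotient.mk (anRel k n) (X 0) ^ m,
          Ideal.Quotient.mk (anRel k n) (X 1) ^ m,
          Ideal.Quotient.mk (anRel k n) (X 2) ^ m}) = #(basisWeights (n + 1) m) := by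
  have hspan : Ideal.span {Ideal.Quotient.mk (anRel k n) (X 0) ^ m,
      Ideal.Quotient.mk (anRel k n) (X 1) ^ m, Ideal.Quotient.mk (anRel k n) (X 2) ^ m} =
      (Ideal.span {X 0 ^ m, X 1 ^ m, X 2 ^ m}).map (Ideal.Quotient.mkₐ k (anRel k n)) := by
    simp [Ideal.map_span, Set.image_insert_eq]
  rw [hspan, (DoubleQuot.quotQuotEquivQuotSupₐ k _ _).toLinearEquiv.finrank_eq]
  exact finrank_quotient_powIdeal

end Basis

end AnSurface

/-- For `R = k[X,Y,Z]/(X^{n+1} - YZ)` and `m = l(n+1) + r` with `0 ≤ r ≤ n`, the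
`k`-dimension of `R/(X^m, Y^m, Z^m)` equals `(2 - 1/(n+1))·m² + r²/(n+1) - r`. -/
theorem stmt0 (k : Type*) [Field k] (n m l r : ℕ)
    (hm : m = l * (n + 1) + r) (hr : r ≤ n) :
    (Module.finrank k
        ((MvPolynomial (Fin 3) k ⧸ anRel k n) ⧸
          Ideal.span {Ideal.Quotient.mk (anRel k n) (X 0) ^ m,
            Ideal.Quotient.mk (anRel k n) (X 1) ^ m,
            Ideal.Quotient.mk (anRel k n) (X 2) ^ m}) : ℚ) =
      (2 - 1 / ((n : ℚ) + 1)) * (m : ℚ) ^ 2 + (r : ℚ) ^ 2 / ((n : ℚ) + 1) - (r : ℚ) := by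
  have hcard : (#(AnSurface.basisWeights (n + 1) m) : ℚ) =
      2 * m ^ 2 - ((n + 1) * l ^ 2 + 2 * l * r + r) := by
    have := AnSurface.card_basisWeights_add (show r < n + 1 by omega) l
    rw [← hm] at this
    rw [eq_sub_iff_add_eq]
    exact_mod_cast this
  rw [AnSurface.finrank_quotient_span_mk_X_pow, hcard, hm]
  push_cast
  field_simp
  ring
end
end

section
/- Let p be an odd prime and let 2 ≤ b ≤ a be natural numbers with 2(a+b) ≥ ab and gcd(a,p) = gcd(b,p) = 1. Then Han's delta function satisfies δ(1/2, 1/a, 1/b) = 0; equivalently, for every s ∈ ℤ the taxicab distance from p^s·(1/2, 1/a, 1/b) to the odd lattice L_odd = {u ∈ ℕ³ : u₁+u₂+u₃ odd} is at least 1. -/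
lemma keyDist (n c : ℕ) (u : ℕ) (hc : 0 < c) (hnd : ¬ c ∣ n) :
    (1:ℚ)/c ≤ |(n:ℚ) * (1/c) - u| := by
  have hcQ : (0:ℚ) < c := by exact_mod_cast hc
  have h1 : (n : ℤ) - c * u ≠ 0 := by
    intro h
    exact hnd ⟨u, by omega⟩
  have h2 : (1:ℚ) ≤ |(((n:ℤ) - c*u : ℤ) : ℚ)| := by
    rw [← Int.cast_abs]
    exact_mod_cast Int.one_le_abs h1
  have heq : (n:ℚ) * (1/c) - u = (((n:ℤ) - c*u : ℤ) : ℚ) / c := by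
    push_cast
    field_simp
  rw [heq, abs_div, abs_of_pos hcQ, div_le_div_iff_of_pos_right hcQ]
  exact h2

/-- Let `p` be an odd prime and `2 ≤ b ≤ a` with `2(a+b) ≥ ab` and `a, b` prime to `p`.
Then Han's delta function satisfies `δ(1/2, 1/a, 1/b) = 0`: for every `s ∈ ℤ` the
taxicab distance from `p^s·(1/2, 1/a, 1/b)` to the odd lattice
`L_odd = {u ∈ ℕ³ : u₁+u₂+u₃ odd}` is at least `1`. -/
theorem stmt6 (p a b : ℕ) (hp : p.Prime) (hodd : Odd p)
    (hb : 2 ≤ b) (hba : b ≤ a) (htri : a * b ≤ 2 * (a + b))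
    (hap : Nat.gcd a p = 1) (hbp : Nat.gcd b p = 1) :
    ∀ (s : ℤ) (u : Fin 3 → ℕ), Odd (u 0 + u 1 + u 2) →
      1 ≤ |(p : ℚ) ^ s * (1 / 2) - (u 0 : ℚ)| + |(p : ℚ) ^ s * (1 / (a : ℚ)) - (u 1 : ℚ)| +
          |(p : ℚ) ^ s * (1 / (b : ℚ)) - (u 2 : ℚ)| := by
  intro s u hu
  have ha2 : 2 ≤ a := le_trans hb hba
  have haQ : (0:ℚ) < a := by exact_mod_cast (by omega : 0 < a)
  have hbQ : (0:ℚ) < b := by exact_mod_cast (by omega : 0 < b)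
  have haQ2 : (2:ℚ) ≤ a := by exact_mod_cast ha2
  have hbQ2 : (2:ℚ) ≤ b := by exact_mod_cast hb
  have hbaQ : (b:ℚ) ≤ a := by exact_mod_cast hba
  have hia : (1:ℚ)/a ≤ 1/2 := one_div_le_one_div_of_le two_pos haQ2
  have hib : (1:ℚ)/b ≤ 1/2 := one_div_le_one_div_of_le two_pos hbQ2
  have hiab : (1:ℚ)/a ≤ 1/b := one_div_le_one_div_of_le hbQ hbaQ
  have htriQ : (a:ℚ) * b ≤ 2 * (a + b) := by exact_mod_cast htri
  have hhalf : (1:ℚ)/2 ≤ 1/a + 1/b := by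
    rw [div_add_div _ _ haQ.ne' hbQ.ne', div_le_div_iff₀ two_pos (by positivity)]
    nlinarith
  have hp3 : 3 ≤ p := by
    have := hp.two_le
    rcases hodd with ⟨m, hm⟩
    omega
  rcases s with k | k
  · -- s = k ≥ 0
    have hpow : (p:ℚ) ^ (Int.ofNat k) = ((p^k : ℕ) : ℚ) := by
      push_cast [Int.ofNat_eq_natCast, zpow_natCast]
      ring
    have hodd' : Odd (p ^ k) := hodd.pow
    have h2d : ¬ (2 ∣ p ^ k) := by
      rcases hodd' with ⟨m, hm⟩
      omega
    have had : ¬ (a ∣ p ^ k) := by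
      intro h
      have hco : Nat.Coprime a (p ^ k) := (Nat.coprime_iff_gcd_eq_one.mpr hap).pow_right k
      have := Nat.Coprime.eq_one_of_dvd hco h
      omega
    have hbd : ¬ (b ∣ p ^ k) := by
      intro h
      have hco : Nat.Coprime b (p ^ k) := (Nat.coprime_iff_gcd_eq_one.mpr hbp).pow_right k
      have := Nat.Coprime.eq_one_of_dvd hco h
      omega
    rw [hpow]
    have k0 := keyDist (p^k) 2 (u 0) (by norm_num) h2d
    have k1 := keyDist (p^k) a (u 1) (by omega) had
    have k2 := keyDist (p^k) b (u 2) (by omega) hbd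
    push_cast at k0 k1 k2 ⊢
    linarith
  · -- s = -(k+1)
    set t : ℚ := (p:ℚ) ^ (Int.negSucc k) with ht
    have htpos : 0 < t := by
      rw [ht, zpow_negSucc]
      positivity
    have htle : t ≤ 1/3 := by
      have h3p : (3:ℚ) ≤ (p:ℚ)^(k+1) :=
        le_trans (by exact_mod_cast hp3)
          (le_self_pow₀ (by exact_mod_cast hp.one_le) (by omega))
      have h := one_div_le_one_div_of_le (by norm_num) h3p
      rw [ht, zpow_negSucc]
      simpa [one_div] using h
    clear ht
    clear_value t
    have A0 := le_abs_self (t * (1/2) - (u 0 : ℚ))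
    have A0' := neg_abs_le (t * (1/2) - (u 0 : ℚ))
    have A1 := le_abs_self (t * (1/a) - (u 1 : ℚ))
    have A1' := neg_abs_le (t * (1/a) - (u 1 : ℚ))
    have A2 := le_abs_self (t * (1/b) - (u 2 : ℚ))
    have A2' := neg_abs_le (t * (1/b) - (u 2 : ℚ))
    by_cases hn : u 0 + u 1 + u 2 = 1
    · have hcases : (u 0 = 1 ∧ u 1 = 0 ∧ u 2 = 0) ∨ (u 0 = 0 ∧ u 1 = 1 ∧ u 2 = 0) ∨
          (u 0 = 0 ∧ u 1 = 0 ∧ u 2 = 1) := by omega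
      rcases hcases with ⟨h0, h1, h2⟩ | ⟨h0, h1, h2⟩ | ⟨h0, h1, h2⟩ <;>
        simp only [h0, h1, h2] at A0 A0' A1 A1' A2 A2' ⊢ <;> push_cast at A0 A0' A1 A1' A2 A2' ⊢
      · nlinarith [mul_le_mul_of_nonneg_left hhalf htpos.le]
      · nlinarith [mul_le_mul_of_nonneg_left hiab htpos.le, mul_le_mul_of_nonneg_left hib htpos.le]
      · nlinarith [mul_le_mul_of_nonneg_left hib htpos.le]
    · have h3 : 3 ≤ u 0 + u 1 + u 2 := by
        rcases hu with ⟨m, hm⟩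
        omega
      have h3Q : (3:ℚ) ≤ (u 0 : ℚ) + u 1 + u 2 := by exact_mod_cast h3
      linarith [mul_le_mul_of_nonneg_left hia htpos.le, mul_le_mul_of_nonneg_left hib htpos.le]
end
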